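/- Let S be a semigroup having at least one minimal left ideal and such that the intersection ideal graph Γ(S) has more than one vertex. Then the following are equivalent: (a) Γ(S) is a star graph; (b) Γ(S) is a tree; (c) Γ(S) is connected and bipartite; (d) either S has exactly three nontrivial left ideals, namely I₁, I₂ and I₁ ∪ I₂ where I₁ and I₂ are minimal left ideals and I₁ ∪ I₂ ≠ S, or S has exactly two nontrivial left ideals I₁ and I₂ with I₁ ⊊ I₂. -/

import Mathlib

/-!
Every nontrivial left ideal `I` contains a minimal one, namely `M x` for a minimal `M` and
`x ∈ I`. If `Γ(S)` has no triangle, no point lies in three vertices. With a unique minimal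
left ideal `M`, every vertex contains `M`, so `Γ(S)` is complete and has exactly two vertices.
With two minimal left ideals `M₁ ≠ M₂` (necessarily disjoint), `M₁ ∪ M₂ = S` would leave only the
two isolated vertices `M₁`, `M₂`; so `M₁ ∪ M₂` is a vertex, and triangle-freeness rules out every
other vertex. In both cases `Γ(S)` is the star centred at its largest vertex. Trees and connected
bipartite graphs are triangle-free, which closes the cycle of implications.
-/

/-- `I` is a left ideal of the semigroup `S`: a nonempty subset closed under
left multiplication by arbitrary elements of `S`. -/
def IsLeftIdeal (S : Type*) [Semigroup S] (I : Set S) : Prop :=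
  I.Nonempty ∧ ∀ s : S, ∀ x ∈ I, s * x ∈ I

/-- `I` is a nontrivial left ideal of `S`: a left ideal with `I ≠ S`. -/
def IsNontrivialLeftIdeal (S : Type*) [Semigroup S] (I : Set S) : Prop :=
  IsLeftIdeal S I ∧ I ≠ Set.univ

/-- `I` is a minimal left ideal of `S`: a nontrivial left ideal properly
containing no left ideal of `S`. -/
def IsMinimalLeftIdeal (S : Type*) [Semigroup S] (I : Set S) : Prop :=
  IsNontrivialLeftIdeal S I ∧ ∀ J : Set S, IsLeftIdeal S J → ¬ J ⊂ I

/-- `I` is a maximal left ideal of `S`: a nontrivial left ideal not properly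
contained in any nontrivial left ideal of `S`. -/
def IsMaximalLeftIdeal (S : Type*) [Semigroup S] (I : Set S) : Prop :=
  IsNontrivialLeftIdeal S I ∧ ∀ J : Set S, IsNontrivialLeftIdeal S J → ¬ I ⊂ J

/-- The intersection ideal graph `Γ(S)`: vertices are the nontrivial left ideals of `S`,
two distinct vertices being adjacent iff their intersection is nonempty. -/
def idealGraph (S : Type*) [Semigroup S] :
    SimpleGraph {I : Set S // IsNontrivialLeftIdeal S I} where
  Adj I J := I ≠ J ∧ (I.1 ∩ J.1).Nonempty
  symm := by
    constructor
    rintro I J ⟨h1, h2⟩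
    exact ⟨h1.symm, by rwa [Set.inter_comm]⟩
  loopless := by constructor; rintro I ⟨h1, -⟩; exact h1 rfl

abbrev NontrivialLeftIdeal (S : Type*) [Semigroup S] := {I : Set S // IsNontrivialLeftIdeal S I}

section LeftIdeal

variable {S : Type*} [Semigroup S] {I J M N : Set S}

theorem IsLeftIdeal.union (hI : IsLeftIdeal S I) (hJ : IsLeftIdeal S J) :
    IsLeftIdeal S (I ∪ J) :=
  ⟨hI.1.mono Set.subset_union_left, fun s x hx => hx.imp (hI.2 s x) (hJ.2 s x)⟩

theorem IsLeftIdeal.inter (hI : IsLeftIdeal S I) (hJ : IsLeftIdeal S J) (h : (I ∩ J).Nonempty) :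
    IsLeftIdeal S (I ∩ J) :=
  ⟨h, fun s x hx => ⟨hI.2 s x hx.1, hJ.2 s x hx.2⟩⟩

theorem IsLeftIdeal.image_mul_right (hI : IsLeftIdeal S I) (x : S) :
    IsLeftIdeal S ((· * x) '' I) := by
  refine ⟨hI.1.image _, ?_⟩
  rintro s _ ⟨m, hm, rfl⟩
  exact ⟨s * m, hI.2 s m hm, mul_assoc s m x⟩

theorem IsMinimalLeftIdeal.eq_of_subset (hM : IsMinimalLeftIdeal S M) (hI : IsLeftIdeal S I)
    (h : I ⊆ M) : I = M :=
  h.eq_or_ssubset.resolve_right (hM.2 I hI)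

theorem IsMinimalLeftIdeal.subset_of_inter_nonempty (hM : IsMinimalLeftIdeal S M)
    (hI : IsLeftIdeal S I) (h : (M ∩ I).Nonempty) : M ⊆ I :=
  Set.inter_eq_left.mp (hM.eq_of_subset (hM.1.1.inter hI h) Set.inter_subset_left)

theorem IsMinimalLeftIdeal.disjoint_of_ne (hM : IsMinimalLeftIdeal S M)
    (hN : IsMinimalLeftIdeal S N) (hne : M ≠ N) : Disjoint M N :=
  Set.disjoint_iff_inter_eq_empty.mpr <| Set.not_nonempty_iff_eq_empty.mp fun h =>
    hne <| (hM.subset_of_inter_nonempty hN.1.1 h).antisymm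
      (hN.subset_of_inter_nonempty hM.1.1 (Set.inter_comm M N ▸ h))

theorem IsMinimalLeftIdeal.image_mul_right (hM : IsMinimalLeftIdeal S M) (x : S)
    (hx : (· * x) '' M ≠ Set.univ) : IsMinimalLeftIdeal S ((· * x) '' M) := by
  refine ⟨⟨hM.1.1.image_mul_right x, hx⟩, fun J hJ hJM => hJM.2 ?_⟩
  obtain ⟨m₀, hm₀, hm₀J⟩ := hJM.1 hJ.1.some_mem
  -- `{m ∈ M | m * x ∈ J}` is a nonempty left subideal of `M`, hence all of `M`.
  have hA : IsLeftIdeal S (M ∩ (· * x) ⁻¹' J) :=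
    ⟨⟨m₀, hm₀, by simpa only [Set.mem_preimage, hm₀J] using hJ.1.some_mem⟩, fun s m hm =>
      ⟨hM.1.1.2 s m hm.1, by simpa only [Set.mem_preimage, mul_assoc] using hJ.2 s _ hm.2⟩⟩
  rw [← hM.eq_of_subset hA Set.inter_subset_left, Set.image_subset_iff]
  exact Set.inter_subset_right

theorem IsMinimalLeftIdeal.exists_subset (hM : IsMinimalLeftIdeal S M)
    (hI : IsNontrivialLeftIdeal S I) : ∃ N, IsMinimalLeftIdeal S N ∧ N ⊆ I := by
  obtain ⟨x, hx⟩ := hI.1.1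
  have hsub : (· * x) '' M ⊆ I := by
    rintro _ ⟨m, -, rfl⟩
    exact hI.1.2 m x hx
  exact ⟨_, hM.image_mul_right x fun h => hI.2 (Set.univ_subset_iff.mp (h ▸ hsub)), hsub⟩

theorem IsMinimalLeftIdeal.eq_of_union_eq_univ (hM : IsMinimalLeftIdeal S M)
    (hN : IsMinimalLeftIdeal S N) (hMN : M ∪ N = Set.univ) (hI : IsNontrivialLeftIdeal S I)
    (h : (M ∩ I).Nonempty) : I = M := by
  refine (Set.Subset.antisymm ?_ (hM.subset_of_inter_nonempty hI.1 h))
  intro y hy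
  refine (hMN ▸ Set.mem_univ y : y ∈ M ∪ N).resolve_right fun hyN => hI.2 ?_
  exact Set.univ_subset_iff.mp <| hMN ▸ Set.union_subset (hM.subset_of_inter_nonempty hI.1 h)
    (hN.subset_of_inter_nonempty hI.1 ⟨y, hyN, hy⟩)

end LeftIdeal

def StarLeftIdealConfiguration (S : Type*) [Semigroup S] : Prop :=
  (∃ I₁ I₂ : Set S, IsMinimalLeftIdeal S I₁ ∧ IsMinimalLeftIdeal S I₂ ∧ I₁ ≠ I₂ ∧
      I₁ ∪ I₂ ≠ Set.univ ∧ {I : Set S | IsNontrivialLeftIdeal S I} = {I₁, I₂, I₁ ∪ I₂}) ∨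
    ∃ I₁ I₂ : Set S, I₁ ⊂ I₂ ∧ {I : Set S | IsNontrivialLeftIdeal S I} = {I₁, I₂}

section IdealGraph

open SimpleGraph

variable {S : Type*} [Semigroup S] {M₁ M₂ N : Set S}

theorem idealGraph_eq_or_eq_or_eq_of_mem (h : (idealGraph S).CliqueFree 3)
    {I J K : NontrivialLeftIdeal S} {x : S} (hI : x ∈ I.1) (hJ : x ∈ J.1) (hK : x ∈ K.1) :
    I = J ∨ I = K ∨ J = K := by
  by_contra! ⟨hIJ, hIK, hJK⟩
  exact h {I, J, K} <|
    is3Clique_triple_iff.mpr ⟨⟨hIJ, x, hI, hJ⟩, ⟨hIK, x, hI, hK⟩, ⟨hJK, x, hJ, hK⟩⟩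

theorem idealGraph_eq_or_eq_of_ssubset (h : (idealGraph S).CliqueFree 3)
    {I J K : NontrivialLeftIdeal S} (hKJ : K.1 ⊂ J.1) {x : S} (hxK : x ∈ K.1) (hxI : x ∈ I.1) :
    I = K ∨ I = J :=
  (idealGraph_eq_or_eq_or_eq_of_mem h hxI hxK (hKJ.1 hxK)).imp_right
    (·.resolve_right fun hKJ' => hKJ.ne (congrArg Subtype.val hKJ'))

theorem union_ne_univ_of_connected [Nontrivial (NontrivialLeftIdeal S)]
    (hconn : (idealGraph S).Connected) (hM₁ : IsMinimalLeftIdeal S M₁)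
    (hM₂ : IsMinimalLeftIdeal S M₂) : M₁ ∪ M₂ ≠ Set.univ := by
  intro hU
  obtain ⟨J, hne, x, hx₁, hxJ⟩ :=
    hconn.preconnected.exists_adj_of_nontrivial (⟨M₁, hM₁.1⟩ : NontrivialLeftIdeal S)
  refine hne (Subtype.ext ?_)
  rcases (hU ▸ Set.mem_univ x : x ∈ M₁ ∪ M₂) with hx | hx
  · exact (hM₁.eq_of_union_eq_univ hM₂ hU J.2 ⟨x, hx, hxJ⟩).symm
  · rw [Set.union_comm] at hU
    exact (hM₂.eq_of_union_eq_univ hM₁ hU hM₁.1 ⟨x, hx, hx₁⟩).trans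
      (hM₂.eq_of_union_eq_univ hM₁ hU J.2 ⟨x, hx, hxJ⟩).symm

theorem exists_ssubset_of_forall_minimal_eq [Nontrivial (NontrivialLeftIdeal S)]
    (h : (idealGraph S).CliqueFree 3) (hM : IsMinimalLeftIdeal S M₁)
    (huniq : ∀ N, IsMinimalLeftIdeal S N → N = M₁) :
    ∃ I₁ I₂ : Set S, I₁ ⊂ I₂ ∧ {I : Set S | IsNontrivialLeftIdeal S I} = {I₁, I₂} := by
  have hsub (I : NontrivialLeftIdeal S) : M₁ ⊆ I.1 := by
    obtain ⟨N, hN, hNI⟩ := hM.exists_subset I.2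
    exact huniq N hN ▸ hNI
  obtain ⟨m, hm⟩ := hM.1.1.1
  obtain ⟨J, hJ⟩ := exists_ne (⟨M₁, hM.1⟩ : NontrivialLeftIdeal S)
  have hMJ : M₁ ⊂ J.1 := (hsub J).ssubset_of_ne fun h => hJ (Subtype.ext h.symm)
  refine ⟨M₁, J.1, hMJ, Set.ext fun I => ⟨fun hI => ?_, ?_⟩⟩
  · rcases idealGraph_eq_or_eq_of_ssubset h (I := ⟨I, hI⟩) (K := ⟨M₁, hM.1⟩) hMJ hm
      (hsub ⟨I, hI⟩ hm) with hI | hI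
    exacts [Or.inl (congrArg Subtype.val hI), Or.inr (congrArg Subtype.val hI)]
  · rintro (rfl | rfl)
    exacts [hM.1, J.2]

theorem IsMinimalLeftIdeal.eq_or_eq_of_cliqueFree (hN : IsMinimalLeftIdeal S N)
    (h : (idealGraph S).CliqueFree 3) (hM₁ : IsMinimalLeftIdeal S M₁)
    (hM₂ : IsMinimalLeftIdeal S M₂) (hne : M₁ ≠ M₂) (hU : M₁ ∪ M₂ ≠ Set.univ) :
    N = M₁ ∨ N = M₂ := by
  by_contra! hN'
  obtain ⟨m₁, hm₁⟩ := hM₁.1.1.1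
  obtain ⟨m₂, hm₂⟩ := hM₂.1.1.1
  obtain ⟨n, hn⟩ := hN.1.1.1
  have hm₂M₁ : m₂ ∉ M₁ := Set.disjoint_right.mp (hM₁.disjoint_of_ne hM₂ hne) hm₂
  have hnM₁ : n ∉ M₁ := Set.disjoint_left.mp (hN.disjoint_of_ne hM₁ hN'.1) hn
  have hnM₂ : n ∉ M₂ := Set.disjoint_left.mp (hN.disjoint_of_ne hM₂ hN'.2) hn
  have hm₂N : m₂ ∉ N := Set.disjoint_right.mp (hN.disjoint_of_ne hM₂ hN'.2) hm₂
  have hUN : M₁ ∪ N ≠ Set.univ := fun hUN =>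
    (hUN ▸ Set.mem_univ m₂ : m₂ ∈ M₁ ∪ N).elim hm₂M₁ hm₂N
  -- `M₁`, `M₁ ∪ M₂` and `M₁ ∪ N` would form a triangle through `m₁`.
  rcases idealGraph_eq_or_eq_or_eq_of_mem h (I := ⟨M₁, hM₁.1⟩)
      (J := ⟨M₁ ∪ M₂, hM₁.1.1.union hM₂.1.1, hU⟩) (K := ⟨M₁ ∪ N, hM₁.1.1.union hN.1.1, hUN⟩)
      hm₁ (Or.inl hm₁) (Or.inl hm₁) with h | h | h <;>
    replace h := congrArg Subtype.val h <;> dsimp only at h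
  · exact hm₂M₁ (h ▸ Or.inr hm₂)
  · exact hnM₁ (h ▸ Or.inr hn)
  · exact (h ▸ Or.inr hn : n ∈ M₁ ∪ M₂).elim hnM₁ hnM₂

theorem setOf_isNontrivialLeftIdeal_eq_of_ne (h : (idealGraph S).CliqueFree 3)
    (hM₁ : IsMinimalLeftIdeal S M₁) (hM₂ : IsMinimalLeftIdeal S M₂) (hne : M₁ ≠ M₂)
    (hU : M₁ ∪ M₂ ≠ Set.univ) :
    {I : Set S | IsNontrivialLeftIdeal S I} = {M₁, M₂, M₁ ∪ M₂} := by
  let U : NontrivialLeftIdeal S := ⟨M₁ ∪ M₂, hM₁.1.1.union hM₂.1.1, hU⟩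
  obtain ⟨m₁, hm₁⟩ := hM₁.1.1.1
  obtain ⟨m₂, hm₂⟩ := hM₂.1.1.1
  have hdisj := hM₁.disjoint_of_ne hM₂ hne
  have hM₁U : M₁ ⊂ U.1 := Set.ssubset_iff_of_subset Set.subset_union_left |>.mpr
    ⟨m₂, Or.inr hm₂, Set.disjoint_right.mp hdisj hm₂⟩
  have hM₂U : M₂ ⊂ U.1 := Set.ssubset_iff_of_subset Set.subset_union_right |>.mpr
    ⟨m₁, Or.inl hm₁, Set.disjoint_left.mp hdisj hm₁⟩
  refine Set.ext fun I => ⟨fun hI => ?_, ?_⟩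
  · obtain ⟨N, hN, hNI⟩ := hM₁.exists_subset hI
    rcases hN.eq_or_eq_of_cliqueFree h hM₁ hM₂ hne hU with hN | hN
    · rcases idealGraph_eq_or_eq_of_ssubset h (I := ⟨I, hI⟩) (K := ⟨M₁, hM₁.1⟩) hM₁U hm₁
        ((hN ▸ hNI) hm₁) with hI | hI
      exacts [Or.inl (congrArg Subtype.val hI), Or.inr (Or.inr (congrArg Subtype.val hI))]
    · rcases idealGraph_eq_or_eq_of_ssubset h (I := ⟨I, hI⟩) (K := ⟨M₂, hM₂.1⟩) hM₂U hm₂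
        ((hN ▸ hNI) hm₂) with hI | hI
      exacts [Or.inr (Or.inl (congrArg Subtype.val hI)), Or.inr (Or.inr (congrArg Subtype.val hI))]
  · rintro (rfl | rfl | rfl)
    exacts [hM₁.1, hM₂.1, U.2]

theorem starLeftIdealConfiguration_of_cliqueFree [Nontrivial (NontrivialLeftIdeal S)]
    (hmin : ∃ M, IsMinimalLeftIdeal S M) (hconn : (idealGraph S).Connected)
    (h : (idealGraph S).CliqueFree 3) : StarLeftIdealConfiguration S := by
  obtain ⟨M, hM⟩ := hmin
  by_cases huniq : ∀ N, IsMinimalLeftIdeal S N → N = M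
  · exact Or.inr (exists_ssubset_of_forall_minimal_eq h hM huniq)
  · push Not at huniq
    obtain ⟨N, hN, hNM⟩ := huniq
    have hU := union_ne_univ_of_connected hconn hM hN
    exact Or.inl ⟨M, N, hM, hN, hNM.symm, hU,
      setOf_isNontrivialLeftIdeal_eq_of_ne h hM hN hNM.symm hU⟩

theorem idealGraph_eq_starGraph (c : NontrivialLeftIdeal S)
    (hc : ∀ v : NontrivialLeftIdeal S, v.1 ⊆ c.1)
    (hdisj : ∀ u v : NontrivialLeftIdeal S, u ≠ c → v ≠ c → u ≠ v → Disjoint u.1 v.1) :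
    idealGraph S = starGraph c := by
  ext u v
  simp only [idealGraph, starGraph_adj]
  refine and_congr_right fun huv => ⟨fun h => ?_, ?_⟩
  · by_contra! hne
    exact Set.disjoint_iff_inter_eq_empty.mp (hdisj u v hne.1 hne.2 huv) ▸ h |>.ne_empty rfl
  · rintro (rfl | rfl)
    · rw [Set.inter_eq_right.mpr (hc v)]
      exact v.2.1.1
    · rw [Set.inter_eq_left.mpr (hc u)]
      exact u.2.1.1

theorem StarLeftIdealConfiguration.exists_idealGraph_eq_starGraph
    (hD : StarLeftIdealConfiguration S) : ∃ c, idealGraph S = starGraph c := by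
  rcases hD with ⟨M₁, M₂, hM₁, hM₂, hne, hU, hset⟩ | ⟨I₁, I₂, hI, hset⟩
  · let c : NontrivialLeftIdeal S := ⟨M₁ ∪ M₂, hM₁.1.1.union hM₂.1.1, hU⟩
    have hmem (v : NontrivialLeftIdeal S) : v.1 ∈ ({M₁, M₂, M₁ ∪ M₂} : Set (Set S)) := hset ▸ v.2
    have hmem' (v : NontrivialLeftIdeal S) (hv : v ≠ c) : v.1 = M₁ ∨ v.1 = M₂ :=
      (hmem v).imp_right (·.resolve_right fun h => hv (Subtype.ext h))
    refine ⟨c, idealGraph_eq_starGraph c (fun v => ?_) fun u v hu hv huv => ?_⟩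
    · rcases hmem v with h | h | h <;> rw [h]
      exacts [Set.subset_union_left, Set.subset_union_right]
    · have hdisj := hM₁.disjoint_of_ne hM₂ hne
      rcases hmem' u hu with hu | hu <;> rcases hmem' v hv with hv | hv <;> rw [hu, hv]
      exacts [absurd (Subtype.ext (hu.trans hv.symm)) huv, hdisj, hdisj.symm,
        absurd (Subtype.ext (hu.trans hv.symm)) huv]
  · have hmem (v : NontrivialLeftIdeal S) : v.1 ∈ ({I₁, I₂} : Set (Set S)) := hset ▸ v.2
    let c : NontrivialLeftIdeal S := ⟨I₂, (Set.ext_iff.mp hset I₂).mpr (Or.inr rfl)⟩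
    have hmem' (v : NontrivialLeftIdeal S) (hv : v ≠ c) : v.1 = I₁ :=
      (hmem v).resolve_right fun h => hv (Subtype.ext h)
    refine ⟨c, idealGraph_eq_starGraph c (fun v => ?_) fun u v hu hv huv => ?_⟩
    · rcases hmem v with h | h <;> rw [h]
      exact hI.1
    · exact absurd (Subtype.ext ((hmem' u hu).trans (hmem' v hv).symm)) huv

end IdealGraph

/-- For a semigroup `S` with a minimal left ideal whose graph `Γ(S)` has more than one
vertex, the conditions "star graph", "tree", "connected and bipartite", and the explicit
ideal-theoretic description are all equivalent. -/
theorem idealGraph_star_tree_bipartite_iff (S : Type*) [Semigroup S]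
    (hmin : ∃ I : Set S, IsMinimalLeftIdeal S I)
    (hvert : Nontrivial {I : Set S // IsNontrivialLeftIdeal S I}) :
    (((idealGraph S).IsTree ∧ ∃ c : {I : Set S // IsNontrivialLeftIdeal S I},
        ∀ v, v ≠ c → (idealGraph S).Adj c v) ↔ (idealGraph S).IsTree)
    ∧ ((idealGraph S).IsTree ↔ (idealGraph S).Connected ∧ (idealGraph S).Colorable 2)
    ∧ ((idealGraph S).Connected ∧ (idealGraph S).Colorable 2 ↔
        ((∃ I₁ I₂ : Set S, IsMinimalLeftIdeal S I₁ ∧ IsMinimalLeftIdeal S I₂ ∧ I₁ ≠ I₂ ∧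
            I₁ ∪ I₂ ≠ Set.univ ∧
            {I : Set S | IsNontrivialLeftIdeal S I} = {I₁, I₂, I₁ ∪ I₂}) ∨
          (∃ I₁ I₂ : Set S, I₁ ⊂ I₂ ∧
            {I : Set S | IsNontrivialLeftIdeal S I} = {I₁, I₂}))) := by
  have classify (hconn : (idealGraph S).Connected) (h2 : (idealGraph S).Colorable 2) :
      StarLeftIdealConfiguration S :=
    starLeftIdealConfiguration_of_cliqueFree hmin hconn (h2.cliqueFree (by norm_num))
  have star_of_connected_colorable (hconn : (idealGraph S).Connected)
      (h2 : (idealGraph S).Colorable 2) : ∃ c, idealGraph S = SimpleGraph.starGraph c :=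
    (classify hconn h2).exists_idealGraph_eq_starGraph
  refine ⟨⟨And.left, fun ht => ⟨ht, ?_⟩⟩, ⟨fun ht => ⟨ht.connected, ht.colorable_two⟩, ?_⟩,
    ⟨fun h => classify h.1 h.2, fun hD => ?_⟩⟩
  · obtain ⟨c, hc⟩ := star_of_connected_colorable ht.connected ht.colorable_two
    exact ⟨c, fun v hv => hc ▸ SimpleGraph.starGraph_center_adj hv.symm⟩
  · rintro ⟨hconn, h2⟩
    obtain ⟨c, hc⟩ := star_of_connected_colorable hconn h2
    exact hc ▸ SimpleGraph.isTree_starGraph c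
  · obtain ⟨c, hc⟩ := StarLeftIdealConfiguration.exists_idealGraph_eq_starGraph hD
    exact hc ▸ ⟨SimpleGraph.connected_starGraph c, (SimpleGraph.isTree_starGraph c).colorable_two⟩
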